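/- Let Ω ⊆ ℝⁿ be a nonempty closed convex set, F : ℝⁿ → ℝⁿ continuous and monotone on Ω, and φ convex, finite and continuous on Ω. If there exists ε̄ > 0 such that S₀ ∩ S_{G_{ε̄}φ} ≠ ∅, then S_{Gεφ} ⊆ S₀ for all ε ∈ (0, ε̄). If moreover F is coercive with respect to Ω, then S_{Gεφ} is bounded for all ε ∈ (0, ε̄). -/

import Mathlib

/-!
If `x̄ ∈ S₀` minimizes `G + ε̄ φ`, then `G x̄ = 0`, since monotonicity gives `⟪F y, x̄ - y⟫ ≤ 0`
on `Ω`. For a minimizer `x` of `G + ε φ` with `0 < ε < ε̄`, comparing both problems at `x` and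
`x̄` gives `ε̄ (φ x̄ - φ x) ≤ G x ≤ ε (φ x̄ - φ x)`, which forces `G x = 0`. By Minty's lemma, the
zeros of `G` on `Ω` are exactly the solutions of the variational inequality. Under coercivity
`⟪F x, x - x̄⟫` is eventually positive, whereas it is nonpositive on `S₀`, so `S₀` is bounded.
-/

open Set
open scoped InnerProductSpace

/-- The dual gap function `G(x) = sup_{y ∈ Ω} ⟨F(y), x − y⟩`, valued in `EReal`. -/
noncomputable def dualGap {n : ℕ} (Ω : Set (EuclideanSpace ℝ (Fin n)))
    (F : EuclideanSpace ℝ (Fin n) → EuclideanSpace ℝ (Fin n))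
    (x : EuclideanSpace ℝ (Fin n)) : EReal :=
  ⨆ y ∈ Ω, ((⟪F y, x - y⟫_ℝ : ℝ) : EReal)

open Filter Topology

section InnerProductSpace

variable {E : Type*} [NormedAddCommGroup E] [InnerProductSpace ℝ E]

/-- `S₀ = sol(F, Ω)`. -/
def viSolutions (Ω : Set E) (F : E → E) : Set E :=
  {x | x ∈ Ω ∧ ∀ y ∈ Ω, 0 ≤ ⟪F x, y - x⟫_ℝ}

variable {Ω : Set E} {F : E → E}

theorem inner_sub_nonpos_of_mem_viSolutions
    (hF : ∀ x ∈ Ω, ∀ y ∈ Ω, 0 ≤ ⟪F x - F y, x - y⟫_ℝ) {x y : E}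
    (hx : x ∈ viSolutions Ω F) (hy : y ∈ Ω) : ⟪F y, x - y⟫_ℝ ≤ 0 := by
  have hmono := hF x hx.1 y hy
  have hsol := hx.2 y hy
  rw [inner_sub_left] at hmono
  rw [← neg_sub, inner_neg_right] at hsol
  linarith

/-- Minty's lemma. -/
theorem Convex.mem_viSolutions_of_inner_sub_nonpos (hΩ : Convex ℝ Ω) {x : E} (hx : x ∈ Ω)
    (hF : ContinuousWithinAt F Ω x) (h : ∀ y ∈ Ω, ⟪F y, x - y⟫_ℝ ≤ 0) :
    x ∈ viSolutions Ω F := by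
  refine ⟨hx, fun z hz => ?_⟩
  let p : ℝ → E := fun t => x + t • (z - x)
  have hp : ∀ t ∈ Ioo (0 : ℝ) 1, p t ∈ Ω := fun t ht =>
    hΩ.add_smul_sub_mem hx hz (Ioo_subset_Icc_self ht)
  have hp_tendsto : Tendsto p (𝓝[>] 0) (𝓝[Ω] x) := by
    refine tendsto_nhdsWithin_iff.2 ⟨?_, ?_⟩
    · have : Continuous p := by fun_prop
      simpa [p] using this.continuousWithinAt.tendsto (x := 0) (s := Ioi 0)
    · filter_upwards [Ioo_mem_nhdsGT one_pos] using hp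
  have hnonneg : ∀ᶠ t in 𝓝[>] (0 : ℝ), 0 ≤ ⟪F (p t), z - x⟫_ℝ := by
    filter_upwards [Ioo_mem_nhdsGT one_pos] with t ht
    have := h (p t) (hp t ht)
    rw [show x - p t = (-t) • (z - x) by simp [p], inner_smul_right] at this
    nlinarith [ht.1]
  exact ge_of_tendsto ((hF.tendsto.comp hp_tendsto).inner tendsto_const_nhds) hnonneg

theorem viSolutions_subset_ball_of_coercive {x₀ : E} (hx₀ : x₀ ∈ Ω) {γ c R : ℝ} (hc : 0 < c)
    (hR : ∀ x ∈ Ω, R ≤ ‖x‖ → c ≤ ⟪F x, x - x₀⟫_ℝ / ‖x‖ ^ γ) :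
    viSolutions Ω F ⊆ Metric.ball 0 R := by
  intro x hx
  rw [mem_ball_zero_iff]
  by_contra! hxR
  have hsol := hx.2 x₀ hx₀
  rw [← neg_sub, inner_neg_right] at hsol
  have hratio : ⟪F x, x - x₀⟫_ℝ / ‖x‖ ^ γ ≤ 0 :=
    div_nonpos_of_nonpos_of_nonneg (by linarith) (Real.rpow_nonneg (norm_nonneg x) γ)
  linarith [hR x hx.1 hxR]

end InnerProductSpace

/-- The step that makes the regularization exact: `ε' (b - a) ≤ g ≤ ε (b - a)` with
`0 ≤ g` and `ε < ε'` forces `b ≤ a`, hence `g ≤ 0`. -/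
theorem EReal.eq_zero_of_add_mul_le_of_mul_le_add {g : EReal} {a b ε ε' : ℝ} (hg : 0 ≤ g)
    (hε : 0 < ε) (hεε' : ε < ε') (h : g + ((ε * a : ℝ) : EReal) ≤ ((ε * b : ℝ) : EReal))
    (h' : ((ε' * b : ℝ) : EReal) ≤ g + ((ε' * a : ℝ) : EReal)) : g = 0 := by
  induction g using EReal.rec with
  | bot => simp at hg
  | top => simp only [EReal.top_add_coe, top_le_iff, EReal.coe_ne_top] at h
  | coe r =>
    norm_cast at hg h h' ⊢
    nlinarith

section DualGap

variable {n : ℕ} {Ω : Set (EuclideanSpace ℝ (Fin n))}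
  {F : EuclideanSpace ℝ (Fin n) → EuclideanSpace ℝ (Fin n)}

theorem le_dualGap {x y : EuclideanSpace ℝ (Fin n)} (hy : y ∈ Ω) :
    ((⟪F y, x - y⟫_ℝ : ℝ) : EReal) ≤ dualGap Ω F x :=
  le_iSup₂_of_le y hy le_rfl

theorem dualGap_nonneg {x : EuclideanSpace ℝ (Fin n)} (hx : x ∈ Ω) : 0 ≤ dualGap Ω F x := by
  simpa using le_dualGap (F := F) (x := x) hx

theorem dualGap_nonpos_iff {x : EuclideanSpace ℝ (Fin n)} :
    dualGap Ω F x ≤ 0 ↔ ∀ y ∈ Ω, ⟪F y, x - y⟫_ℝ ≤ 0 := by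
  simp only [dualGap, iSup₂_le_iff, EReal.coe_nonpos]

theorem dualGap_eq_zero_iff (hΩ : Convex ℝ Ω) (hFc : ContinuousOn F Ω)
    (hFm : ∀ x ∈ Ω, ∀ y ∈ Ω, 0 ≤ ⟪F x - F y, x - y⟫_ℝ) {x : EuclideanSpace ℝ (Fin n)}
    (hx : x ∈ Ω) : dualGap Ω F x = 0 ↔ x ∈ viSolutions Ω F := by
  rw [← (dualGap_nonneg hx).ge_iff_eq', dualGap_nonpos_iff]
  exact ⟨hΩ.mem_viSolutions_of_inner_sub_nonpos hx (hFc x hx),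
    fun hsol _ hy => inner_sub_nonpos_of_mem_viSolutions hFm hsol hy⟩

/-- `S_{Gεφ}`. -/
def dualGapRegMinimizers (Ω : Set (EuclideanSpace ℝ (Fin n)))
    (F : EuclideanSpace ℝ (Fin n) → EuclideanSpace ℝ (Fin n))
    (φ : EuclideanSpace ℝ (Fin n) → ℝ) (ε : ℝ) : Set (EuclideanSpace ℝ (Fin n)) :=
  {x | x ∈ Ω ∧ ∀ z ∈ Ω, dualGap Ω F x + ((ε * φ x : ℝ) : EReal) ≤
    dualGap Ω F z + ((ε * φ z : ℝ) : EReal)}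

theorem dualGapRegMinimizers_subset_viSolutions (hΩ : Convex ℝ Ω) (hFc : ContinuousOn F Ω)
    (hFm : ∀ x ∈ Ω, ∀ y ∈ Ω, 0 ≤ ⟪F x - F y, x - y⟫_ℝ) {φ : EuclideanSpace ℝ (Fin n) → ℝ}
    {ε ε' : ℝ} (hε : 0 < ε) (hεε' : ε < ε') {x₀ : EuclideanSpace ℝ (Fin n)}
    (hx₀ : x₀ ∈ viSolutions Ω F) (hx₀' : x₀ ∈ dualGapRegMinimizers Ω F φ ε') :
    dualGapRegMinimizers Ω F φ ε ⊆ viSolutions Ω F := by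
  rintro x ⟨hx, hxmin⟩
  have hGx₀ : dualGap Ω F x₀ = 0 := (dualGap_eq_zero_iff hΩ hFc hFm hx₀.1).2 hx₀
  have h := hxmin x₀ hx₀.1
  have h' := hx₀'.2 x hx
  rw [hGx₀, zero_add] at h h'
  exact (dualGap_eq_zero_iff hΩ hFc hFm hx).1
    (EReal.eq_zero_of_add_mul_le_of_mul_le_add (dualGap_nonneg hx) hε hεε' h h')

end DualGap

theorem exact_regularization_of_dual_gap {n : ℕ}
    (Ω : Set (EuclideanSpace ℝ (Fin n)))
    (hconv : Convex ℝ Ω)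
    (F : EuclideanSpace ℝ (Fin n) → EuclideanSpace ℝ (Fin n))
    (hFcont : ContinuousOn F Ω)
    (hFmono : ∀ x ∈ Ω, ∀ y ∈ Ω, 0 ≤ ⟪F x - F y, x - y⟫_ℝ)
    (φ : EuclideanSpace ℝ (Fin n) → ℝ)
    (εbar : ℝ)
    -- S₀ ∩ S_{G_{ε̄}φ} ≠ ∅
    (hexact : ∃ x, (x ∈ Ω ∧ ∀ y ∈ Ω, 0 ≤ ⟪F x, y - x⟫_ℝ) ∧
      x ∈ Ω ∧ ∀ z ∈ Ω, dualGap Ω F x + ((εbar * φ x : ℝ) : EReal) ≤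
        dualGap Ω F z + ((εbar * φ z : ℝ) : EReal)) :
    (∀ ε : ℝ, 0 < ε → ε < εbar →
      {x | x ∈ Ω ∧ ∀ z ∈ Ω, dualGap Ω F x + ((ε * φ x : ℝ) : EReal) ≤
          dualGap Ω F z + ((ε * φ z : ℝ) : EReal)} ⊆
        {x | x ∈ Ω ∧ ∀ y ∈ Ω, 0 ≤ ⟪F x, y - x⟫_ℝ}) ∧
    ((∃ γ : ℝ, 0 < γ ∧ ∀ x₀ ∈ Ω, ∃ c : ℝ, 0 < c ∧ ∃ R : ℝ,
        ∀ x ∈ Ω, R ≤ ‖x‖ → c ≤ ⟪F x, x - x₀⟫_ℝ / ‖x‖ ^ γ) →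
      ∀ ε : ℝ, 0 < ε → ε < εbar →
        Bornology.IsBounded
          {x | x ∈ Ω ∧ ∀ z ∈ Ω, dualGap Ω F x + ((ε * φ x : ℝ) : EReal) ≤
            dualGap Ω F z + ((ε * φ z : ℝ) : EReal)}) := by
  obtain ⟨x₀, hx₀, hx₀'⟩ := hexact
  have hsub : ∀ ε : ℝ, 0 < ε → ε < εbar →
      dualGapRegMinimizers Ω F φ ε ⊆ viSolutions Ω F := fun ε hε hεε' =>
    dualGapRegMinimizers_subset_viSolutions hconv hFcont hFmono hε hεε' hx₀ hx₀'
  refine ⟨hsub, ?_⟩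
  rintro ⟨γ, -, hcoer⟩ ε hε hεε'
  obtain ⟨c, hc, R, hR⟩ := hcoer x₀ hx₀.1
  exact Metric.isBounded_ball.subset
    ((hsub ε hε hεε').trans (viSolutions_subset_ball_of_coercive hx₀.1 hc hR))
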